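/- For each u ∈ 𝒮: (i) u_i = sup_{w ∈ ℳᵐ ∪ 𝒦} (μ_u(w) + w_i) for all i ∈ S; (ii) μ_u restricted to ℳᵐ ∪ 𝒦 is the maximal map with this property: any ν : ℳᵐ ∪ 𝒦 → ℝ ∪ {−∞} with u_i = sup_{w ∈ ℳᵐ ∪ 𝒦} (ν(w) + w_i) for all i satisfies ν(w) ≤ μ_u(w) for all w ∈ ℳᵐ ∪ 𝒦; (iii) any such ν satisfies sup_{w ∈ ℳᵐ ∪ 𝒦} ν(w) < +∞; (iv) conversely, for any ν : ℳᵐ ∪ 𝒦 → ℝ ∪ {−∞} with sup_{w ∈ ℳᵐ ∪ 𝒦} ν(w) < +∞, the vector u defined by u_i = sup_{w ∈ ℳᵐ ∪ 𝒦} (ν(w) + w_i) belongs to 𝒮. -/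

import Mathlib

open Filter Topology

noncomputable section

namespace MaxPlus

variable {S : Type*}

/-- Weight of the path `p 0, p 1, ..., p n` for the kernel `A`. -/
def pathWeight (A : S → S → EReal) (p : ℕ → S) (n : ℕ) : EReal :=
  ∑ k ∈ Finset.range n, A (p k) (p (k + 1))

/-- The max-plus star kernel `A*`: supremum of weights of paths of length `≥ 0`. -/
def star (A : S → S → EReal) (i j : S) : EReal :=
  ⨆ (n : ℕ) (p : ℕ → S) (_ : p 0 = i ∧ p n = j), pathWeight A p n

/-- The max-plus kernel `A⁺`: supremum of weights of paths of length `≥ 1`. -/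
def plus (A : S → S → EReal) (i j : S) : EReal :=
  ⨆ (n : ℕ) (_ : 1 ≤ n) (p : ℕ → S) (_ : p 0 = i ∧ p n = j), pathWeight A p n

/-- `π` is a left super-harmonic row vector (with full support, being real valued). -/
def LeftSuperharmonic (A : S → S → EReal) (π : S → ℝ) : Prop :=
  ∀ j, (⨆ i, ((π i : EReal) + A i j)) ≤ (π j : EReal)

/-- The Martin kernel `K_{ij} = A*_{ij} - π_j`. -/
def K (A : S → S → EReal) (π : S → ℝ) (i j : S) : EReal :=
  star A i j - (π j : EReal)

/-- `K♭_{ij} = A⁺_{ij} - π_j`. -/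
def Kflat (A : S → S → EReal) (π : S → ℝ) (i j : S) : EReal :=
  plus A i j - (π j : EReal)

/-- The set `𝒦` of columns of the Martin kernel. -/
def kerCols (A : S → S → EReal) (π : S → ℝ) : Set (S → EReal) :=
  Set.range fun j => fun i => K A π i j

/-- The Martin space `ℳ`: closure of `𝒦` in the product topology. -/
def martin (A : S → S → EReal) (π : S → ℝ) : Set (S → EReal) :=
  closure (kerCols A π)

/-- `μ_u(w)`: the limsup of `π_j + u_j` as `K_{·j} → w`. -/
def mu (A : S → S → EReal) (π : S → ℝ) (u : S → EReal) (w : S → EReal) : EReal :=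
  ⨅ (W : Set (S → EReal)) (_ : W ∈ 𝓝 w),
    ⨆ (j : S) (_ : (fun i => K A π i j) ∈ W), ((π j : EReal) + u j)

/-- `w♭_i`: the liminf of `K♭_{ij}` as `K_{·j} → w`. -/
def flat (A : S → S → EReal) (π : S → ℝ) (w : S → EReal) (i : S) : EReal :=
  ⨆ (W : Set (S → EReal)) (_ : W ∈ 𝓝 w),
    ⨅ (j : S) (_ : (fun i' => K A π i' j) ∈ W), Kflat A π i j

/-- The kernel `H(z,w) = μ_w(z)`. -/
def H (A : S → S → EReal) (π : S → ℝ) (z w : S → EReal) : EReal := mu A π w z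

/-- The kernel `H♭(z,w) = μ_{w♭}(z)`. -/
def Hflat (A : S → S → EReal) (π : S → ℝ) (z w : S → EReal) : EReal :=
  mu A π (flat A π w) z

/-- The minimal Martin space `ℳᵐ = {w ∈ ℳ : H♭(w,w) = 0}`. -/
def martinMin (A : S → S → EReal) (π : S → ℝ) : Set (S → EReal) :=
  {w | w ∈ martin A π ∧ Hflat A π w w = 0}

/-- The maximal circuit mean `ρ(A)`. -/
def maxCircuitMean (A : S → S → EReal) : EReal :=
  ⨆ (k : ℕ) (_ : 1 ≤ k) (p : ℕ → S) (_ : p k = p 0),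
    (((k : ℝ)⁻¹ : ℝ) : EReal) * pathWeight A p k

/-- `α`-almost-geodesic with respect to the left super-harmonic vector `π`. -/
def IsAlmostGeodesic (A : S → S → EReal) (π : S → ℝ) (x : ℕ → S) : Prop :=
  ∃ α : ℝ, 0 ≤ α ∧ ∀ k : ℕ,
    (π (x k) : EReal) ≤ (α : EReal) + (π (x 0) : EReal) + pathWeight A x k

/-- The set `𝒮` of `π`-integrable super-harmonic vectors. -/
def Sset (A : S → S → EReal) (π : S → ℝ) : Set (S → EReal) :=
  {u | (∀ i, u i ≠ ⊤) ∧ (∀ i, (⨆ j, A i j + u j) ≤ u i) ∧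
    (⨆ j, ((π j : EReal) + u j)) < ⊤}

/-- The set `ℋ` of `π`-integrable harmonic vectors. -/
def Hset (A : S → S → EReal) (π : S → ℝ) : Set (S → EReal) :=
  {u | (∀ i, u i ≠ ⊤) ∧ (∀ i, (⨆ j, A i j + u j) = u i) ∧
    (⨆ j, ((π j : EReal) + u j)) < ⊤}

/-- A vector is normalised if `sup_j (π_j + u_j) = 0`. -/
def Normalised (π : S → ℝ) (u : S → EReal) : Prop :=
  (⨆ j, ((π j : EReal) + u j)) = 0

/-- `ξ` is an extremal generator of `V`. -/
def ExtremalGen (V : Set (S → EReal)) (ξ : S → EReal) : Prop :=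
  ξ ∈ V ∧ ξ ≠ (fun _ => (⊥ : EReal)) ∧
    ∀ u v, u ∈ V → v ∈ V → ξ = (fun i => u i ⊔ v i) → ξ = u ∨ ξ = v

end MaxPlus

/-! Every point of the Martin space inherits, as a limit of columns of `K`, the inequalities
`π_j + w_j ≤ 0` and `A_ij + w_j ≤ w_i`; this gives (iv). For super-harmonic `u` one has
`(π_j + u_j) + K_ij ≤ u_i`, and taking the limsup as `K_{·j} → w` yields `μ_u(w) + w_i ≤ u_i`,
with equality at the column `w = K_{·i}`, whence (i). Maximality (ii) follows from
`H(w, w) ≥ 0` on `ℳᵐ ∪ 𝒦` (on `ℳᵐ` because `w♭ ≤ w`), and (iii) from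
`μ_u ≤ sup_j (π_j + u_j)`. -/

namespace EReal

lemma add_iSup_le {ι : Sort*} {a b : EReal} {f : ι → EReal} (h : ∀ i, a + f i ≤ b) :
    a + ⨆ i, f i ≤ b :=
  add_le_of_forall_lt fun _ ha _ hc =>
    let ⟨i, hi⟩ := lt_iSup_iff.1 hc
    (add_le_add ha.le hi.le).trans (h i)

lemma continuous_coe_add (a : ℝ) : Continuous fun x : EReal => (a : EReal) + x :=
  continuous_iff_continuousAt.2 fun _ =>
    (continuousAt_add (Or.inl (coe_ne_top a)) (Or.inl (coe_ne_bot a))).comp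
      (continuous_const.prodMk continuous_id).continuousAt

end EReal

namespace MaxPlus

section

variable {S : Type*} {A : S → S → EReal} {π : S → ℝ}

@[simp]
lemma pathWeight_zero (p : ℕ → S) : pathWeight A p 0 = 0 :=
  Finset.sum_range_zero _

lemma pathWeight_succ (p : ℕ → S) (n : ℕ) :
    pathWeight A p (n + 1) = pathWeight A p n + A (p n) (p (n + 1)) :=
  Finset.sum_range_succ _ _

lemma pathWeight_cons (i : S) (p : ℕ → S) (n : ℕ) :
    pathWeight A (fun m => Nat.casesOn m i p) (n + 1) = A i (p 0) + pathWeight A p n :=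
  (Finset.sum_range_succ' _ _).trans (add_comm _ _)

lemma pathWeight_le_star {p : ℕ → S} {n : ℕ} {i j : S} (h : p 0 = i ∧ p n = j) :
    pathWeight A p n ≤ star A i j :=
  le_iSup_of_le n <| le_iSup_of_le p <| le_iSup_of_le h le_rfl

lemma add_star_le_of_forall {c x : EReal} {i j : S}
    (h : ∀ n (p : ℕ → S), p 0 = i → p n = j → c + pathWeight A p n ≤ x) :
    c + star A i j ≤ x :=
  EReal.add_iSup_le fun n => EReal.add_iSup_le fun p => EReal.add_iSup_le fun hp =>
    h n p hp.1 hp.2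

lemma add_star_le_star (i k j : S) : A i k + star A k j ≤ star A i j :=
  add_star_le_of_forall fun n p hp0 hpn => by
    rw [← hp0, ← pathWeight_cons]
    exact pathWeight_le_star ⟨rfl, hpn⟩

lemma plus_le_star (i j : S) : plus A i j ≤ star A i j :=
  iSup_le fun _ => iSup_le fun _ => iSup_le fun _ => iSup_le pathWeight_le_star

lemma Kflat_le_K (i j : S) : Kflat A π i j ≤ K A π i j :=
  EReal.sub_le_sub (plus_le_star i j) le_rfl

lemma add_K_le_K (i j j' : S) : A i j + K A π j j' ≤ K A π i j' := by
  simp only [K, sub_eq_add_neg, ← add_assoc]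
  exact add_le_add_left (add_star_le_star i j j') _

namespace LeftSuperharmonic

lemma coe_add_le (hπ : LeftSuperharmonic A π) (i j : S) : (π i : EReal) + A i j ≤ π j :=
  (le_iSup (fun i => (π i : EReal) + A i j) i).trans (hπ j)

lemma ne_top (hπ : LeftSuperharmonic A π) (i j : S) : A i j ≠ ⊤ := fun h => by
  simpa [h] using hπ.coe_add_le i j

lemma coe_add_pathWeight_le (hπ : LeftSuperharmonic A π) (p : ℕ → S) (n : ℕ) :
    (π (p 0) : EReal) + pathWeight A p n ≤ π (p n) := by
  induction n with
  | zero => simp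
  | succ n ih =>
    rw [pathWeight_succ, ← add_assoc]
    exact (add_le_add_left ih _).trans (hπ.coe_add_le _ _)

lemma coe_add_star_le (hπ : LeftSuperharmonic A π) (i j : S) :
    (π i : EReal) + star A i j ≤ π j :=
  add_star_le_of_forall fun n p hp0 hpn => hp0 ▸ hpn ▸ hπ.coe_add_pathWeight_le p n

lemma star_self (hπ : LeftSuperharmonic A π) (i : S) : star A i i = 0 := by
  refine le_antisymm ?_ ?_
  · by_contra! h
    simpa using (EReal.add_lt_add_left_coe h (π i)).trans_le (hπ.coe_add_star_le i i)
  · simpa using pathWeight_le_star (A := A) (p := fun _ : ℕ => i) (n := 0) ⟨rfl, rfl⟩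

lemma K_self (hπ : LeftSuperharmonic A π) (i : S) : K A π i i = -(π i : EReal) := by
  rw [K, hπ.star_self, zero_sub]

lemma coe_add_K_le_zero (hπ : LeftSuperharmonic A π) (j j' : S) :
    (π j : EReal) + K A π j j' ≤ 0 := by
  rw [K, sub_eq_add_neg, ← add_assoc, ← sub_eq_add_neg]
  calc (π j : EReal) + star A j j' - π j' ≤ π j' - π j' :=
        EReal.sub_le_sub (hπ.coe_add_star_le j j') le_rfl
    _ = 0 := by rw [← EReal.coe_sub, sub_self, EReal.coe_zero]

end LeftSuperharmonic

lemma pathWeight_add_le_of_superharmonic {u : S → EReal} (hu : ∀ i, ⨆ j, A i j + u j ≤ u i)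
    (p : ℕ → S) (n : ℕ) :
    pathWeight A p n + u (p n) ≤ u (p 0) := by
  induction n with
  | zero => simp
  | succ n ih =>
    rw [pathWeight_succ, add_assoc]
    exact (add_le_add_right ((le_iSup (fun j => A (p n) j + u j) _).trans (hu _)) _).trans ih

lemma add_star_le_of_superharmonic {u : S → EReal} (hu : ∀ i, ⨆ j, A i j + u j ≤ u i)
    (i j : S) : u j + star A i j ≤ u i :=
  add_star_le_of_forall fun n p hp0 hpn => by
    rw [add_comm, ← hp0, ← hpn]
    exact pathWeight_add_le_of_superharmonic hu p n

lemma coe_add_add_K_le_of_superharmonic {u : S → EReal} (hu : ∀ i, ⨆ j, A i j + u j ≤ u i)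
    (i j : S) : ((π j : EReal) + u j) + K A π i j ≤ u i := by
  have h : ((π j : EReal) + u j) + K A π i j = (u j + star A i j) + π j - π j := by
    simp only [K, sub_eq_add_neg]
    ac_rfl
  rw [h, EReal.add_sub_cancel_right]
  exact add_star_le_of_superharmonic hu i j

lemma mu_le_iSup (u w : S → EReal) : mu A π u w ≤ ⨆ j, (π j : EReal) + u j :=
  (iInf₂_le Set.univ univ_mem).trans
    (iSup₂_le fun j _ => le_iSup (fun j => (π j : EReal) + u j) j)

lemma le_mu_col (u : S → EReal) (j : S) :
    (π j : EReal) + u j ≤ mu A π u (fun i => K A π i j) :=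
  le_iInf₂ fun _ hW => le_iSup₂_of_le j (mem_of_mem_nhds hW) le_rfl

lemma mu_mono {u v : S → EReal} (h : u ≤ v) (w : S → EReal) : mu A π u w ≤ mu A π v w :=
  iInf₂_mono fun _ _ => iSup₂_mono fun j _ => add_le_add_right (h j) _

lemma add_mu_le_mu_const_add (c : EReal) (v w : S → EReal) :
    c + mu A π v w ≤ mu A π (fun j => c + v j) w :=
  le_iInf₂ fun W hW => (add_le_add_right (iInf₂_le W hW) c).trans <|
    EReal.add_iSup_le fun j => EReal.add_iSup_le fun hj =>
      le_iSup₂_of_le j hj (add_left_comm _ _ _).le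

lemma mu_add_le_of_forall {u w : S → EReal} {i : S} {x : EReal}
    (h : ∀ j, ((π j : EReal) + u j) + K A π i j ≤ x) : mu A π u w + w i ≤ x :=
  EReal.add_le_of_forall_lt fun a ha b hb => by
    have hW : {v : S → EReal | b < v i} ∈ 𝓝 w :=
      (isOpen_lt continuous_const (continuous_apply i)).mem_nhds hb
    obtain ⟨j, hjW, hj⟩ : ∃ j, b < K A π i j ∧ a < π j + u j := by
      simpa [lt_iSup_iff] using ha.trans_le (iInf₂_le _ hW)
    exact (add_le_add hj.le hjW.le).trans (h j)

lemma coe_add_le_zero_of_mem_martin (hπ : LeftSuperharmonic A π) {w : S → EReal}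
    (hw : w ∈ martin A π) (j : S) : (π j : EReal) + w j ≤ 0 := by
  have : martin A π ⊆ {v | (π j : EReal) + v j ≤ 0} :=
    closure_minimal (Set.range_subset_iff.2 fun j' => hπ.coe_add_K_le_zero j j')
      (isClosed_le ((EReal.continuous_coe_add _).comp (continuous_apply j)) continuous_const)
  exact this hw

lemma add_le_of_mem_martin {w : S → EReal} (hw : w ∈ martin A π) {i j : S} (hA : A i j ≠ ⊤) :
    A i j + w j ≤ w i := by
  induction h : A i j with
  | bot => simp
  | coe a =>
    have : martin A π ⊆ {v | (a : EReal) + v j ≤ v i} :=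
      closure_minimal (Set.range_subset_iff.2 fun j' => h ▸ add_K_le_K i j j')
        (isClosed_le ((EReal.continuous_coe_add a).comp (continuous_apply j))
          (continuous_apply i))
    exact this hw
  | top => exact absurd h hA

lemma flat_le_of_mem_martin {w : S → EReal} (hw : w ∈ martin A π) (i : S) :
    flat A π w i ≤ w i :=
  iSup₂_le fun W hW => EReal.le_of_forall_lt_iff_le.1 fun z hz => by
    obtain ⟨_, ⟨hvW, hvz⟩, j, rfl⟩ := mem_closure_iff_nhds.1 hw _
      (inter_mem hW ((isOpen_lt (continuous_apply i) continuous_const).mem_nhds hz))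
    exact (iInf₂_le j hvW).trans ((Kflat_le_K i j).trans hvz.le)

lemma zero_le_mu_self (hπ : LeftSuperharmonic A π) {w : S → EReal}
    (hw : w ∈ martinMin A π ∪ kerCols A π) : 0 ≤ mu A π w w := by
  rcases hw with ⟨hwM, hw0⟩ | ⟨j, rfl⟩
  · exact hw0.ge.trans (mu_mono (flat_le_of_mem_martin hwM) w)
  · simpa [hπ.K_self, ← EReal.coe_neg, ← EReal.coe_add] using
      le_mu_col (A := A) (π := π) (fun i => K A π i j) j

lemma le_mu_of_add_le {c : EReal} {u w : S → EReal} (hw : 0 ≤ mu A π w w)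
    (h : ∀ j, c + w j ≤ u j) : c ≤ mu A π u w := calc
  c ≤ c + mu A π w w := le_add_of_nonneg_right hw
  _ ≤ mu A π (fun j => c + w j) w := add_mu_le_mu_const_add _ _ _
  _ ≤ mu A π u w := mu_mono h w

lemma eq_iSup_mu_add (hπ : LeftSuperharmonic A π) {u : S → EReal}
    (hu : ∀ i, ⨆ j, A i j + u j ≤ u i) {T : Set (S → EReal)} (hT : kerCols A π ⊆ T) (i : S) :
    u i = ⨆ w ∈ T, mu A π u w + w i := by
  refine le_antisymm ?_ (iSup₂_le fun w _ =>
    mu_add_le_of_forall fun j => coe_add_add_K_le_of_superharmonic hu i j)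
  calc u i = ((π i : EReal) + u i) + K A π i i := by
        rw [hπ.K_self, ← sub_eq_add_neg, EReal.add_sub_cancel_left]
    _ ≤ mu A π u (fun i' => K A π i' i) + K A π i i := add_le_add_left (le_mu_col u i) _
    _ ≤ ⨆ w ∈ T, mu A π u w + w i := le_iSup₂_of_le _ (hT ⟨i, rfl⟩) le_rfl

lemma iSup_add_mem_Sset (hπ : LeftSuperharmonic A π) {T : Set (S → EReal)}
    (hT : T ⊆ martin A π) {ν : (S → EReal) → EReal} (hν : ⨆ w ∈ T, ν w < ⊤) :
    (fun i => ⨆ w ∈ T, ν w + w i) ∈ Sset A π := by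
  have hint : ⨆ j, (π j : EReal) + ⨆ w ∈ T, ν w + w j ≤ ⨆ w ∈ T, ν w :=
    iSup_le fun j => EReal.add_iSup_le fun w => EReal.add_iSup_le fun hw => calc
      (π j : EReal) + (ν w + w j) = ν w + (π j + w j) := add_left_comm _ _ _
      _ ≤ ν w := add_le_of_nonpos_right (coe_add_le_zero_of_mem_martin hπ (hT hw) j)
      _ ≤ ⨆ w ∈ T, ν w := le_iSup₂_of_le w hw le_rfl
  refine ⟨fun i htop => ?_, fun i => ?_, hint.trans_lt hν⟩
  · beta_reduce at htop
    have := (le_iSup (fun j => (π j : EReal) + ⨆ w ∈ T, ν w + w j) i).trans hint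
    rw [htop, EReal.coe_add_top] at this
    exact hν.ne (top_le_iff.1 this)
  · exact iSup_le fun j => EReal.add_iSup_le fun w => EReal.add_iSup_le fun hw => calc
      A i j + (ν w + w j) = ν w + (A i j + w j) := add_left_comm _ _ _
      _ ≤ ν w + w i := add_le_add_right (add_le_of_mem_martin (hT hw) (hπ.ne_top i j)) _
      _ ≤ ⨆ w ∈ T, ν w + w i := le_iSup₂_of_le w hw le_rfl

end

theorem martin_representation_superharmonic_general {S : Type*} (A : S → S → EReal)
    (π : S → ℝ) (hπ : LeftSuperharmonic A π)
    (u : S → EReal) (hu : u ∈ Sset A π) :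
    (∀ i, u i = ⨆ w ∈ martinMin A π ∪ kerCols A π, (mu A π u w + w i)) ∧
    (∀ ν : (S → EReal) → EReal, (∀ w, ν w ≠ ⊤) →
        (∀ i, u i = ⨆ w ∈ martinMin A π ∪ kerCols A π, (ν w + w i)) →
        ∀ w ∈ martinMin A π ∪ kerCols A π, ν w ≤ mu A π u w) ∧
    (∀ ν : (S → EReal) → EReal, (∀ w, ν w ≠ ⊤) →
        (∀ i, u i = ⨆ w ∈ martinMin A π ∪ kerCols A π, (ν w + w i)) →
        (⨆ w ∈ martinMin A π ∪ kerCols A π, ν w) < ⊤) ∧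
    (∀ ν : (S → EReal) → EReal, (∀ w, ν w ≠ ⊤) →
        (⨆ w ∈ martinMin A π ∪ kerCols A π, ν w) < ⊤ →
        (fun i => ⨆ w ∈ martinMin A π ∪ kerCols A π, (ν w + w i)) ∈ Sset A π) := by
  obtain ⟨-, hu_super, hu_int⟩ := hu
  have hmax (ν : (S → EReal) → EReal)
      (hν : ∀ i, u i = ⨆ w ∈ martinMin A π ∪ kerCols A π, (ν w + w i))
      (w : S → EReal) (hw : w ∈ martinMin A π ∪ kerCols A π) : ν w ≤ mu A π u w :=
    le_mu_of_add_le (zero_le_mu_self hπ hw) fun j => (hν j).symm ▸ le_iSup₂_of_le w hw le_rfl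
  refine ⟨eq_iSup_mu_add hπ hu_super Set.subset_union_right, fun ν _ => hmax ν,
    fun ν _ hν => ?_, fun ν _ hν => ?_⟩
  · exact (iSup₂_le fun w hw => (hmax ν hν w hw).trans (mu_le_iSup u w)).trans_lt hu_int
  · exact iSup_add_mem_Sset hπ (Set.union_subset (fun _ hw => hw.1) subset_closure) hν

/-- Martin representation of super-harmonic vectors. For `u ∈ 𝒮`:
(i) `u_i = sup_{w ∈ ℳᵐ ∪ 𝒦} (μ_u(w) + w_i)`;
(ii) `μ_u` is maximal among the maps `ν` representing `u`;
(iii) any representing `ν` is bounded above;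
(iv) conversely, any bounded above `ν : ℳᵐ ∪ 𝒦 → ℝ ∪ {−∞}` defines an element of `𝒮`. -/
theorem martin_representation_superharmonic {S : Type*} (A : S → S → EReal)
    (hA : ∀ i j, A i j ≠ ⊤) (π : S → ℝ) (hπ : LeftSuperharmonic A π)
    (u : S → EReal) (hu : u ∈ Sset A π) :
    (∀ i, u i = ⨆ w ∈ martinMin A π ∪ kerCols A π, (mu A π u w + w i)) ∧
    (∀ ν : (S → EReal) → EReal, (∀ w, ν w ≠ ⊤) →
        (∀ i, u i = ⨆ w ∈ martinMin A π ∪ kerCols A π, (ν w + w i)) →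
        ∀ w ∈ martinMin A π ∪ kerCols A π, ν w ≤ mu A π u w) ∧
    (∀ ν : (S → EReal) → EReal, (∀ w, ν w ≠ ⊤) →
        (∀ i, u i = ⨆ w ∈ martinMin A π ∪ kerCols A π, (ν w + w i)) →
        (⨆ w ∈ martinMin A π ∪ kerCols A π, ν w) < ⊤) ∧
    (∀ ν : (S → EReal) → EReal, (∀ w, ν w ≠ ⊤) →
        (⨆ w ∈ martinMin A π ∪ kerCols A π, ν w) < ⊤ →
        (fun i => ⨆ w ∈ martinMin A π ∪ kerCols A π, (ν w + w i)) ∈ Sset A π) :=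
  martin_representation_superharmonic_general A π hπ u hu

end MaxPlus
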